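/- If h ≥ 2, the i-th ordered configuration space F_h^i(k,n) is nonempty if and only if k+1 ≤ i ≤ min(kh, n). -/

import Mathlib

open Topology Matrix Module

/-- The complex Stiefel manifold `V(k,n)`: ordered `k`-tuples of orthonormal vectors in
`ℂ^n`, realized as `k × n` complex matrices with orthonormal rows. -/
def Stiefel (k n : ℕ) : Type :=
  {A : Matrix (Fin k) (Fin n) ℂ // A * Aᴴ = 1}

noncomputable instance (k n : ℕ) : TopologicalSpace (Stiefel k n) :=
  instTopologicalSpaceSubtype

/-- The complex Grassmannian `Gr(k,n)` of `k`-dimensional subspaces of `ℂ^n`, realized as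
hermitian idempotent `n × n` complex matrices (orthogonal projectors) of rank `k`. -/
def Grass (k n : ℕ) : Type :=
  {P : Matrix (Fin n) (Fin n) ℂ // P * P = P ∧ Pᴴ = P ∧ P.rank = k}

noncomputable instance (k n : ℕ) : TopologicalSpace (Grass k n) :=
  instTopologicalSpaceSubtype

/-- The `k`-dimensional subspace of `ℂ^n` corresponding to a point of `Gr(k,n)`:
the range of the associated projector. -/
noncomputable def Grass.sp {k n : ℕ} (P : Grass k n) : Submodule ℂ (Fin n → ℂ) :=
  LinearMap.range P.1.mulVecLin

/-- The ordered configuration space `F_h^i(k,n)` of `h` pairwise distinct points of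
`Gr(k,n)` whose sum is a subspace of dimension `i`. -/
def Config (h i k n : ℕ) : Type :=
  {H : Fin h → Grass k n // Function.Injective H ∧
    finrank ℂ ↥(⨆ j, (H j).sp : Submodule ℂ (Fin n → ℂ)) = i}

noncomputable instance (h i k n : ℕ) : TopologicalSpace (Config h i k n) :=
  instTopologicalSpaceSubtype

/-- `p : E → B` is a locally trivial fibration with fiber `F`: every point of the base has
an open neighborhood `U` over which `p` is trivial, i.e. there is a homeomorphism
`p⁻¹(U) ≃ₜ U × F` over `U`. -/
def IsLocTrivFibration {E B : Type*} (F : Type*) [TopologicalSpace E] [TopologicalSpace B]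
    [TopologicalSpace F] (p : E → B) : Prop :=
  ∀ b : B, ∃ U : Set B, IsOpen U ∧ b ∈ U ∧
    ∃ e : {x : E // p x ∈ U} ≃ₜ U × F, ∀ x, ((e x).1 : B) = p x.1

/-! A sum of `h` subspaces of dimension `k` has dimension at most `k * h`, and two distinct ones
already span more than `k` dimensions. Conversely, `h` distinct `k`-planes spanning `d` dimensions
are built one plane at a time: if `d` is reachable with one plane fewer, the new plane is taken
inside the span of the others and through a vector avoiding all of them (a vector space over an
infinite field is not a finite union of proper subspaces); otherwise it is taken to enlarge the
span by `min k (d - k)` dimensions. Orthogonal projectors identify `Gr(k,n)` with the set of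
`k`-dimensional subspaces of `ℂ^n`. -/

lemma Matrix.range_toEuclideanCLM {𝕜 ι : Type*} [RCLike 𝕜] [Fintype ι] [DecidableEq ι]
    (A : Matrix ι ι 𝕜) :
    (Matrix.toEuclideanCLM (𝕜 := 𝕜) A : EuclideanSpace 𝕜 ι →ₗ[𝕜] _).range =
      (LinearMap.range A.mulVecLin).map (WithLp.linearEquiv 2 𝕜 (ι → 𝕜)).symm.toLinearMap := by
  ext x
  simp only [LinearMap.mem_range, Submodule.mem_map]
  constructor
  · rintro ⟨y, rfl⟩
    exact ⟨_, ⟨y.ofLp, rfl⟩, rfl⟩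
  · rintro ⟨_, ⟨y, rfl⟩, rfl⟩
    exact ⟨WithLp.toLp 2 y, rfl⟩

namespace Grass

variable {k n : ℕ}

lemma isStarProjection (P : Grass k n) : IsStarProjection P.1 := ⟨P.2.1, P.2.2.1⟩

lemma finrank_sp (P : Grass k n) : finrank ℂ P.sp = k := P.2.2.2

lemma sp_injective : Function.Injective (sp : Grass k n → _) := by
  intro P Q hPQ
  refine Subtype.ext (EquivLike.injective (Matrix.toEuclideanCLM (n := Fin n) (𝕜 := ℂ)) ?_)
  refine ContinuousLinearMap.IsStarProjection.ext (P.isStarProjection.map Matrix.toEuclideanCLM)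
    (Q.isStarProjection.map Matrix.toEuclideanCLM) ?_
  rw [Matrix.range_toEuclideanCLM, Matrix.range_toEuclideanCLM]
  exact congrArg _ hPQ

lemma range_sp :
    Set.range (sp : Grass k n → _) = {U : Submodule ℂ (Fin n → ℂ) | finrank ℂ U = k} := by
  refine Set.Subset.antisymm (Set.range_subset_iff.2 finrank_sp) fun U hU => ?_
  let e := Matrix.toEuclideanCLM (n := Fin n) (𝕜 := ℂ)
  let U' := U.map (WithLp.linearEquiv 2 ℂ (Fin n → ℂ)).symm.toLinearMap
  let P := e.symm U'.starProjection
  have hP : IsStarProjection P := isStarProjection_starProjection.map e.symm.toStarAlgHom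
  have hsp : LinearMap.range P.mulVecLin = U := by
    have hrange := Matrix.range_toEuclideanCLM P
    rw [StarAlgEquiv.apply_symm_apply, Submodule.range_starProjection] at hrange
    exact (Submodule.map_injective_of_injective (LinearEquiv.injective _) hrange).symm
  exact ⟨⟨P, hP.isIdempotentElem, hP.isSelfAdjoint, by rw [Matrix.rank, hsp]; exact hU⟩, hsp⟩

end Grass

namespace Submodule

variable {K V : Type*} [DivisionRing K] [AddCommGroup V] [Module K V] [Module.Finite K V]

lemma finrank_iSup_le_sum {ι : Type*} [Fintype ι] (F : ι → Submodule K V) :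
    finrank K ↥(⨆ j, F j) ≤ ∑ j, finrank K (F j) := by
  classical
  rw [← Finset.sup_univ_eq_iSup]
  induction (Finset.univ : Finset ι) using Finset.induction with
  | empty => simp
  | insert a s ha ih =>
    rw [Finset.sup_insert, Finset.sum_insert ha]
    exact (finrank_add_le_finrank_add_finrank _ _).trans (Nat.add_le_add_left ih _)

lemma finrank_lt_finrank_sup_of_ne {U W : Submodule K V} (hUW : U ≠ W)
    (h : finrank K U ≤ finrank K W) : finrank K U < finrank K ↥(U ⊔ W) := by
  refine finrank_lt_finrank_of_lt (lt_of_le_of_ne le_sup_left fun hU => hUW ?_)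
  exact (eq_of_le_of_finrank_le (hU ▸ le_sup_right) h).symm

lemma exists_le_finrank_sup_eq_add {Y W Z : Submodule K V} (hYZ : Y ≤ Z) (hWZ : W ≤ Z) {j : ℕ}
    (hj : finrank K ↥(W ⊔ Y) + j ≤ finrank K Z) :
    ∃ U, Y ≤ U ∧ U ≤ Z ∧
      finrank K U = finrank K Y + j ∧ finrank K ↥(W ⊔ U) = finrank K ↥(W ⊔ Y) + j := by
  induction j with
  | zero => exact ⟨Y, le_rfl, hYZ, rfl, rfl⟩
  | succ j ih =>
    obtain ⟨U, hYU, hUZ, hU, hWU⟩ := ih (by omega)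
    obtain ⟨v, hvZ, hv⟩ : ∃ v ∈ Z, v ∉ W ⊔ U :=
      SetLike.exists_of_lt (lt_of_le_of_ne (sup_le hWZ hUZ) fun h => by rw [h] at hWU; omega)
    refine ⟨U ⊔ span K {v}, le_sup_of_le_left hYU,
      sup_le hUZ ((span_singleton_le_iff_mem _ _).2 hvZ), ?_, ?_⟩
    · rw [finrank_sup_span_singleton fun h => hv (mem_sup_right h), hU, add_assoc]
    · rw [← sup_assoc, finrank_sup_span_singleton hv, hWU, add_assoc]

lemma exists_le_le_finrank_eq {Y Z : Submodule K V} (hYZ : Y ≤ Z) {r : ℕ}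
    (hYr : finrank K Y ≤ r) (hrZ : r ≤ finrank K Z) :
    ∃ U, Y ≤ U ∧ U ≤ Z ∧ finrank K U = r := by
  obtain ⟨U, hYU, hUZ, hU, -⟩ := exists_le_finrank_sup_eq_add hYZ bot_le (W := ⊥)
    (j := r - finrank K Y) (by rw [bot_sup_eq]; omega)
  exact ⟨U, hYU, hUZ, by omega⟩

lemma exists_finrank_eq_finrank_sup_eq_add (W : Submodule K V) {k r : ℕ} (hrk : r ≤ k)
    (hkW : k ≤ finrank K W + r) (hWV : finrank K W + r ≤ finrank K V) :
    ∃ U : Submodule K V, finrank K U = k ∧ finrank K ↥(W ⊔ U) = finrank K W + r := by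
  obtain ⟨Y, -, hYW, hY⟩ := exists_le_le_finrank_eq (bot_le : ⊥ ≤ W) (r := k - r)
    (by rw [finrank_bot]; exact Nat.zero_le _) (by omega)
  obtain ⟨U, -, -, hU, hWU⟩ := exists_le_finrank_sup_eq_add le_top le_top (Y := Y) (W := W) (j := r)
    (by rw [sup_eq_left.2 hYW, finrank_top]; exact hWV)
  exact ⟨U, by omega, by rwa [sup_eq_left.2 hYW] at hWU⟩

lemma exists_le_finrank_eq_forall_ne [Infinite K] {ι : Type*} [Finite ι] (F : ι → Submodule K V)
    {W : Submodule K V} (hW : ∀ j, ¬ W ≤ F j) {k : ℕ} (hk : 0 < k) (hkW : k ≤ finrank K W) :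
    ∃ U ≤ W, finrank K U = k ∧ ∀ j, U ≠ F j := by
  obtain ⟨w, hw⟩ : ∃ w : W, ∀ j, (w : V) ∉ F j := by
    by_contra! h
    obtain ⟨j, hj⟩ := Subspace.exists_eq_top_of_iUnion_eq_univ (p := fun j => (F j).comap W.subtype)
      (Set.eq_univ_of_forall fun w => Set.mem_iUnion.2 (h w))
    exact hW j (comap_subtype_eq_top.1 hj)
  obtain ⟨U, hwU, hUW, hU⟩ := exists_le_le_finrank_eq ((span_singleton_le_iff_mem _ _).2 w.2)
    ((finrank_span_le_card _).trans
      (by rw [Set.toFinset_singleton, Finset.card_singleton]; exact hk)) hkW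
  exact ⟨U, hUW, hU, fun j hUj => hw j (hUj ▸ hwU (mem_span_singleton_self _))⟩

end Submodule

lemma Fin.iSup_cons {α : Type*} [CompleteLattice α] {m : ℕ} (a : α) (f : Fin m → α) :
    ⨆ j, (Fin.cons a f : Fin (m + 1) → α) j = a ⊔ ⨆ j, f j :=
  le_antisymm (iSup_le <| Fin.cases le_sup_left fun j => le_sup_of_le_right (le_iSup f j))
    (sup_le (le_iSup_of_le 0 le_rfl) (iSup_le fun j => le_iSup_of_le j.succ le_rfl))

section

open Submodule

variable {K V : Type*} [DivisionRing K] [AddCommGroup V] [Module K V] [Module.Finite K V]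

theorem exists_injective_finrank_eq_finrank_iSup_eq [Infinite K] {k : ℕ} (m : ℕ) {d : ℕ}
    (hkd : k ≤ d) (hdk : d ≤ k * (m + 1)) (hdV : d ≤ finrank K V) (hm : m = 0 ∨ k < d) :
    ∃ H : Fin (m + 1) → Submodule K V, Function.Injective H ∧ (∀ j, finrank K (H j) = k) ∧
      finrank K ↥(⨆ j, H j) = d := by
  induction m generalizing d with
  | zero =>
    obtain ⟨U, -, -, hU⟩ := exists_le_le_finrank_eq (bot_le : ⊥ ≤ (⊤ : Submodule K V)) (r := k)
      (by rw [finrank_bot]; exact Nat.zero_le _) (by rw [finrank_top]; omega)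
    refine ⟨fun _ => U, fun a b _ => Subsingleton.elim (α := Fin 1) a b, fun _ => hU, ?_⟩
    rw [iSup_const]; omega
  | succ m ih =>
    have hkd' : k < d := hm.resolve_left m.succ_ne_zero
    have hk : 0 < k := Nat.pos_of_ne_zero fun hk0 => by simp [hk0] at hdk; omega
    by_cases hd : d ≤ k * (m + 1)
    · obtain ⟨H, hHinj, hH, hHd⟩ := ih hkd hd hdV (Or.inr hkd')
      obtain ⟨U, hUW, hU, hUH⟩ := exists_le_finrank_eq_forall_ne H (W := ⨆ j, H j) (k := k)
        (fun j hj => by have := finrank_mono hj; have := hH j; omega) hk (by omega)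
      refine ⟨Fin.cons U H, Fin.cons_injective_iff.2 ⟨?_, hHinj⟩, Fin.cases hU hH, ?_⟩
      · rintro ⟨j, hj⟩
        exact hUH j hj.symm
      · rwa [Fin.iSup_cons, sup_eq_right.2 hUW]
    · have hkm := mul_add_one k m
      have hkm' := mul_add_one k (m + 1)
      have hm' : m = 0 ∨ k < max k (d - k) := by
        rcases Nat.eq_zero_or_pos m with hm0 | hm0
        · exact Or.inl hm0
        · have := Nat.le_mul_of_pos_right k hm0; omega
      obtain ⟨H, hHinj, hH, hHd⟩ := ih (d := max k (d - k)) (le_max_left _ _) (by omega)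
        (by omega) hm'
      obtain ⟨U, hU, hUd⟩ := exists_finrank_eq_finrank_sup_eq_add (⨆ j, H j)
        (r := d - max k (d - k)) (k := k) (by omega) (by omega) (by omega)
      rw [hHd, Nat.add_sub_cancel' (by omega)] at hUd
      refine ⟨Fin.cons U H, Fin.cons_injective_iff.2 ⟨?_, hHinj⟩, Fin.cases hU hH, ?_⟩
      · rintro ⟨j, rfl⟩
        rw [sup_eq_left.2 (le_iSup H j), hHd] at hUd
        omega
      · rwa [Fin.iSup_cons, sup_comm]

theorem exists_injective_finrank_eq_finrank_iSup_eq_iff [Infinite K] {h k d : ℕ} (hh : 2 ≤ h) :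
    (∃ H : Fin h → Submodule K V, Function.Injective H ∧ (∀ j, finrank K (H j) = k) ∧
      finrank K ↥(⨆ j, H j) = d) ↔ k + 1 ≤ d ∧ d ≤ min (k * h) (finrank K V) := by
  constructor
  · rintro ⟨H, hHinj, hH, rfl⟩
    have hsum : finrank K ↥(⨆ j, H j) ≤ k * h := by
      simpa [hH, mul_comm] using finrank_iSup_le_sum H
    have hlt := finrank_lt_finrank_sup_of_ne
      (hHinj.ne (by simp : (⟨0, Nat.zero_lt_of_lt hh⟩ : Fin h) ≠ ⟨1, hh⟩)) (by rw [hH, hH])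
    rw [hH] at hlt
    exact ⟨hlt.trans_le (finrank_mono (sup_le (le_iSup H _) (le_iSup H _))),
      le_min hsum (finrank_le _)⟩
  · rintro ⟨hkd, hd⟩
    obtain ⟨m, rfl⟩ : ∃ m, h = m + 1 := ⟨h - 1, by omega⟩
    exact exists_injective_finrank_eq_finrank_iSup_eq m (by omega) (hd.trans (min_le_left _ _))
      (hd.trans (min_le_right _ _)) (Or.inr hkd)

end

theorem config_nonempty_iff_exists_submodule {h i k n : ℕ} :
    Nonempty (Config h i k n) ↔ ∃ H : Fin h → Submodule ℂ (Fin n → ℂ), Function.Injective H ∧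
      (∀ j, finrank ℂ (H j) = k) ∧ finrank ℂ ↥(⨆ j, H j) = i := by
  constructor
  · rintro ⟨H, hHinj, hHi⟩
    exact ⟨fun j => (H j).sp, Grass.sp_injective.comp hHinj, fun j => (H j).finrank_sp, hHi⟩
  · rintro ⟨H, hHinj, hH, hHi⟩
    choose P hP using fun j => (Grass.range_sp (k := k) (n := n)).ge (hH j)
    have hPH : (fun j => (P j).sp) = H := funext hP
    exact ⟨⟨P, fun a b hab => hHinj (by rw [← hP a, ← hP b, hab]), by rwa [hPH]⟩⟩

theorem config_nonempty_iff_general (h i k n : ℕ) (hh : 2 ≤ h) :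
    Nonempty (Config h i k n) ↔ (k + 1 ≤ i ∧ i ≤ min (k * h) n) := by
  rw [config_nonempty_iff_exists_submodule, exists_injective_finrank_eq_finrank_iSup_eq_iff hh,
    Module.finrank_fin_fun]

/-- For `h ≥ 2` and `0 < k < n`, the ordered configuration space `F_h^i(k,n)` is nonempty
if and only if `k + 1 ≤ i ≤ min (k*h) n`. -/
theorem config_nonempty_iff (h i k n : ℕ) (hh : 2 ≤ h) (hk : 0 < k) (hkn : k < n) :
    Nonempty (Config h i k n) ↔ (k + 1 ≤ i ∧ i ≤ min (k * h) n) :=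
  config_nonempty_iff_general h i k n hh
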